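/- arXiv:1909.06204 — 2 statements merged into one kernel-verified Lean document; each statement's English description precedes it below -/
import Mathlib

section
/- Let φ : ℝ³ → ℝ be a C² function such that there is a constant C > 0 with |φ(x)| ≤ C(1+‖x‖)^{-1} and ‖∇φ(x)‖ ≤ C(1+‖x‖)^{-2} for all x ∈ ℝ³. Suppose that (1/4)‖∇φ(x)‖² + (1/3)φ(x)·Δφ(x) = 0 for every x ∈ ℝ³, where Δ is the Euclidean Laplacian on ℝ³ and ∇φ the Euclidean gradient. Then φ is identically zero. -/
/-!
The hypothesis says `φ Δφ = -(3/4) ‖∇φ‖²`, so `Δ(φ²) = 2 ‖∇φ‖² + 2 φ Δφ = (1/2) ‖∇φ‖² ≥ 0`: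
the function `φ²` is subharmonic. By the weak maximum principle, `φ(x)²` is at most the maximum
of `φ²` on any sphere `‖y‖ = R ≥ ‖x‖`, which is `O(R⁻²)` by the decay of `φ`; letting `R → ∞`
gives `φ(x) = 0`. The maximum principle itself comes from perturbing by `ε ‖y‖²`: a function with
`Δ > 0` has no interior local maximum, since there all second directional derivatives are `≤ 0`.
-/

/-- The Euclidean Laplacian of a function on `ℝ³`, as the sum of the second
partial derivatives in the coordinate directions. -/
noncomputable def euclideanLaplacian (φ : EuclideanSpace ℝ (Fin 3) → ℝ)
    (x : EuclideanSpace ℝ (Fin 3)) : ℝ :=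
  ∑ i : Fin 3,
    fderiv ℝ (fun y => fderiv ℝ φ y (EuclideanSpace.single i 1)) x (EuclideanSpace.single i 1)

open Filter Metric Topology

theorem IsLocalMax.deriv_deriv_nonpos {f : ℝ → ℝ} {a : ℝ} (h : IsLocalMax f a)
    (hc : ContinuousAt f a) : deriv (deriv f) a ≤ 0 := by
  by_contra! hpos
  have hmin := isLocalMin_of_deriv_deriv_pos hpos h.deriv_eq_zero hc
  have hconst : f =ᶠ[𝓝 a] fun _ => f a :=
    (hmin.and h).mono fun _ hx => le_antisymm hx.2 hx.1
  have : deriv (deriv f) a = 0 := by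
    rw [hconst.deriv.deriv_eq]
    simp
  exact hpos.ne' this

section DirectionalDerivatives

variable {E : Type*} [NormedAddCommGroup E] [NormedSpace ℝ E]

theorem ContDiff.differentiable_fderiv_apply {F : Type*} [NormedAddCommGroup F]
    [NormedSpace ℝ F] {f : E → F} (hf : ContDiff ℝ 2 f) (e : E) :
    Differentiable ℝ (fun y => fderiv ℝ f y e) :=
  ((hf.fderiv_right le_rfl).clm_apply contDiff_const).differentiable one_ne_zero

theorem IsLocalMax.fderiv_fderiv_apply_nonpos {f : E → ℝ} (hf : ContDiff ℝ 2 f) {x : E}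
    (h : IsLocalMax f x) (e : E) : fderiv ℝ (fun y => fderiv ℝ f y e) x e ≤ 0 := by
  have hline : ∀ t : ℝ, HasDerivAt (fun s : ℝ => x + s • e) e t := fun t => by
    simpa using ((hasDerivAt_id t).smul_const e).const_add x
  have hmax : IsLocalMax (fun t : ℝ => f (x + t • e)) 0 := by
    have hx : IsLocalMax f (x + (0 : ℝ) • e) := by rwa [zero_smul, add_zero]
    exact IsLocalMax.comp_continuous (g := fun t : ℝ => x + t • e) hx (hline 0).continuousAt
  have hfirst : deriv (fun t : ℝ => f (x + t • e)) = fun t => fderiv ℝ f (x + t • e) e := by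
    funext t
    exact ((hf.differentiable two_ne_zero _).hasFDerivAt.comp_hasDerivAt t (hline t)).deriv
  have hsecond : deriv (fun t : ℝ => fderiv ℝ f (x + t • e) e) 0
      = fderiv ℝ (fun y => fderiv ℝ f y e) x e := by
    simpa [Function.comp_def] using
      ((hf.differentiable_fderiv_apply e _).hasFDerivAt.comp_hasDerivAt 0 (hline 0)).deriv
  simpa [hfirst, hsecond] using
    hmax.deriv_deriv_nonpos (hf.continuous.continuousAt.comp (hline 0).continuousAt)

theorem fderiv_fderiv_sq_apply {f : E → ℝ} (hf : ContDiff ℝ 2 f) (x e : E) :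
    fderiv ℝ (fun y => fderiv ℝ (fun z => f z ^ 2) y e) x e
      = 2 * fderiv ℝ f x e ^ 2 + 2 * f x * fderiv ℝ (fun y => fderiv ℝ f y e) x e := by
  have hdf : Differentiable ℝ f := hf.differentiable two_ne_zero
  have hfirst : (fun y => fderiv ℝ (fun z => f z ^ 2) y e)
      = fun y => 2 * f y * fderiv ℝ f y e := by
    funext y
    simp [fderiv_fun_pow 2 (hdf y)]
  rw [hfirst, fderiv_fun_mul ((hdf x).const_mul 2) (hf.differentiable_fderiv_apply e x),
    fderiv_const_mul (hdf x)]
  simp only [add_apply, smul_apply, smul_eq_mul]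
  ring

end DirectionalDerivatives

theorem fderiv_fderiv_add_const_mul_norm_sq_apply {F : Type*} [NormedAddCommGroup F]
    [InnerProductSpace ℝ F] {u : F → ℝ} (hu : ContDiff ℝ 2 u) (c : ℝ) (x e : F) :
    fderiv ℝ (fun y => fderiv ℝ (fun z => u z + c * ‖z‖ ^ 2) y e) x e
      = fderiv ℝ (fun y => fderiv ℝ u y e) x e + 2 * c * ‖e‖ ^ 2 := by
  have hdu : Differentiable ℝ u := hu.differentiable two_ne_zero
  have hfirst : (fun y => fderiv ℝ (fun z => u z + c * ‖z‖ ^ 2) y e)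
      = fun y => fderiv ℝ u y e + 2 * c * inner ℝ e y := by
    funext y
    rw [fderiv_fun_add (hdu y) ((hasStrictFDerivAt_norm_sq y).differentiableAt.const_mul c),
      fderiv_const_mul (hasStrictFDerivAt_norm_sq y).differentiableAt]
    simp only [fderiv_norm_sq_apply, add_apply, smul_apply, coe_innerSL_apply, real_inner_comm,
      nsmul_eq_mul, Nat.cast_ofNat, smul_eq_mul]
    ring
  have hinner : HasFDerivAt (fun y => 2 * c * inner ℝ e y) ((2 * c) • innerSL ℝ e) x :=
    (innerSL ℝ e).hasFDerivAt.const_mul (2 * c)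
  rw [hfirst, ((hu.differentiable_fderiv_apply e x).hasFDerivAt.fun_add hinner).fderiv]
  simp

theorem EuclideanSpace.norm_gradient_sq_eq_sum {ι : Type*} [Fintype ι] [DecidableEq ι]
    (f : EuclideanSpace ℝ ι → ℝ) (x : EuclideanSpace ℝ ι) :
    ‖gradient f x‖ ^ 2 = ∑ i, fderiv ℝ f x (EuclideanSpace.single i 1) ^ 2 := by
  simp [EuclideanSpace.real_norm_sq_eq, ← inner_gradient_left, EuclideanSpace.inner_single_right]

section Laplacian

local notation "ℝ³" => EuclideanSpace ℝ (Fin 3)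

theorem euclideanLaplacian_sq {f : ℝ³ → ℝ} (hf : ContDiff ℝ 2 f) (x : ℝ³) :
    euclideanLaplacian (fun y => f y ^ 2) x
      = 2 * ‖gradient f x‖ ^ 2 + 2 * f x * euclideanLaplacian f x := by
  simp only [euclideanLaplacian, fderiv_fderiv_sq_apply hf, Finset.sum_add_distrib,
    ← Finset.mul_sum, EuclideanSpace.norm_gradient_sq_eq_sum]

theorem euclideanLaplacian_add_const_mul_norm_sq {u : ℝ³ → ℝ} (hu : ContDiff ℝ 2 u) (c : ℝ)
    (x : ℝ³) :
    euclideanLaplacian (fun y => u y + c * ‖y‖ ^ 2) x = euclideanLaplacian u x + 6 * c := by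
  simp only [euclideanLaplacian, fderiv_fderiv_add_const_mul_norm_sq_apply hu,
    Finset.sum_add_distrib, PiLp.norm_single, norm_one, one_pow, mul_one, Finset.sum_const,
    Finset.card_univ, Fintype.card_fin, nsmul_eq_mul, Nat.cast_ofNat]
  ring

theorem IsLocalMax.euclideanLaplacian_nonpos {u : ℝ³ → ℝ} (hu : ContDiff ℝ 2 u) {x : ℝ³}
    (h : IsLocalMax u x) : euclideanLaplacian u x ≤ 0 :=
  Finset.sum_nonpos fun _ _ => h.fderiv_fderiv_apply_nonpos hu _

theorem exists_mem_sphere_le_of_euclideanLaplacian_pos {w : ℝ³ → ℝ} (hw : ContDiff ℝ 2 w)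
    (hΔ : ∀ y, 0 < euclideanLaplacian w y) {R : ℝ} {x : ℝ³} (hx : x ∈ closedBall 0 R) :
    ∃ y ∈ sphere (0 : ℝ³) R, w x ≤ w y := by
  obtain ⟨y, hyR, hmax⟩ :=
    (isCompact_closedBall (0 : ℝ³) R).exists_isMaxOn ⟨x, hx⟩ hw.continuous.continuousOn
  refine ⟨y, ?_, hmax hx⟩
  rw [← closedBall_sdiff_ball]
  refine ⟨hyR, fun hy => ?_⟩
  have hlocal := hmax.isLocalMax (closedBall_mem_nhds_of_mem hy)
  exact (hΔ y).not_ge (hlocal.euclideanLaplacian_nonpos hw)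

theorem le_on_closedBall_of_euclideanLaplacian_nonneg {u : ℝ³ → ℝ} (hu : ContDiff ℝ 2 u)
    (hΔ : ∀ y, 0 ≤ euclideanLaplacian u y) {R M : ℝ} (hM : ∀ y ∈ sphere (0 : ℝ³) R, u y ≤ M)
    {x : ℝ³} (hx : x ∈ closedBall 0 R) : u x ≤ M := by
  have hperturbed : ∀ ε > 0, u x ≤ M + ε * R ^ 2 := by
    intro ε hε
    have hw : ContDiff ℝ 2 fun y : ℝ³ => u y + ε * ‖y‖ ^ 2 :=
      hu.add (contDiff_const.mul (contDiff_norm_sq ℝ))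
    obtain ⟨y, hy, hxy⟩ := exists_mem_sphere_le_of_euclideanLaplacian_pos hw
      (fun y => by rw [euclideanLaplacian_add_const_mul_norm_sq hu]; linarith [hΔ y]) hx
    rw [mem_sphere_zero_iff_norm.1 hy] at hxy
    linarith [hM y hy, mul_nonneg hε.le (sq_nonneg ‖x‖)]
  have hlim : Tendsto (fun ε => M + ε * R ^ 2) (𝓝[>] 0) (𝓝 M) :=
    tendsto_nhdsWithin_of_tendsto_nhds <|
      (continuous_const.add (continuous_id.mul continuous_const)).tendsto' 0 M (by simp)
  exact ge_of_tendsto hlim (eventually_nhdsWithin_of_forall hperturbed)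

end Laplacian

theorem scalar_flat_no_conformal_scalar_hair_general
    (φ : EuclideanSpace ℝ (Fin 3) → ℝ) (hφ : ContDiff ℝ 2 φ)
    (C : ℝ)
    (hdecay : ∀ x, |φ x| ≤ C * (1 + ‖x‖) ^ (-(1 : ℝ)))
    (heq : ∀ x, (1 / 4) * ‖gradient φ x‖ ^ 2 + (1 / 3) * φ x * euclideanLaplacian φ x = 0) :
    ∀ x, φ x = 0 := by
  have hsubharmonic : ∀ y, 0 ≤ euclideanLaplacian (fun y => φ y ^ 2) y := fun y => by
    rw [euclideanLaplacian_sq hφ]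
    linarith [heq y, sq_nonneg ‖gradient φ y‖]
  intro x
  have hbound : ∀ R, ‖x‖ ≤ R → φ x ^ 2 ≤ (C * (1 + R) ^ (-(1 : ℝ))) ^ 2 := fun R hR =>
    le_on_closedBall_of_euclideanLaplacian_nonneg (hφ.pow 2) hsubharmonic
      (fun y hy => by
        rw [← mem_sphere_zero_iff_norm.1 hy, ← sq_abs]
        exact pow_le_pow_left₀ (abs_nonneg _) (hdecay y) 2)
      (mem_closedBall_zero_iff.2 hR)
  have hlim : Tendsto (fun R : ℝ => (C * (1 + R) ^ (-(1 : ℝ))) ^ 2) atTop (𝓝 0) := by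
    simpa using (((tendsto_rpow_neg_atTop one_pos).comp
      (tendsto_atTop_add_const_left atTop 1 tendsto_id)).const_mul C).pow 2
  have hsq : φ x ^ 2 ≤ 0 := ge_of_tendsto hlim ((eventually_ge_atTop ‖x‖).mono hbound)
  exact pow_eq_zero_iff two_ne_zero |>.1 (hsq.antisymm (sq_nonneg _))

/-- Concluding claim of Section 5 of the paper: a `C²` conformal scalar field
`φ` on flat `ℝ³` with the decay `φ = O(r⁻¹)`, `∇φ = O(r⁻²)`, whose energy
density `-(1/4)|∇φ|² - (1/3) φ Δφ` vanishes identically, must vanish. -/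
theorem scalar_flat_no_conformal_scalar_hair
    (φ : EuclideanSpace ℝ (Fin 3) → ℝ) (hφ : ContDiff ℝ 2 φ)
    (C : ℝ) (hC : 0 < C)
    (hdecay : ∀ x, |φ x| ≤ C * (1 + ‖x‖) ^ (-(1 : ℝ)))
    (hgrad : ∀ x, ‖gradient φ x‖ ≤ C * (1 + ‖x‖) ^ (-(2 : ℝ)))
    (heq : ∀ x, (1 / 4) * ‖gradient φ x‖ ^ 2 + (1 / 3) * φ x * euclideanLaplacian φ x = 0) :
    ∀ x, φ x = 0 :=
  scalar_flat_no_conformal_scalar_hair_general φ hφ C hdecay heq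
end

section
/- Let τ > 1/2 and C > 0. Let g : {x ∈ ℝ³ : ‖x‖ ≥ 1} → Matrix (Fin 3) (Fin 3) ℝ be a C¹ map taking values in symmetric matrices with ‖g(x) - I‖ ≤ C‖x‖^{-τ} and ‖∂_k g(x)‖ ≤ C‖x‖^{-τ-1} for all k and all ‖x‖ ≥ 1, and let f : {‖x‖ ≥ 1} → ℝ be C¹ with |f(x)| ≤ C‖x‖^{-τ} and ‖∇f(x)‖ ≤ C‖x‖^{-τ-1}. Set ḡ = e^{f} g and g' = e^{2f} g. Then lim_{r→∞} ∫_{S_r} Σ_{i,j} [ (∂_i g'_{ij} - ∂_j g'_{ii}) + (∂_i g_{ij} - ∂_j g_{ii}) - 2(∂_i ḡ_{ij} - ∂_j ḡ_{ii}) ] (x_j/r) dS(x) = 0, where S_r ⊂ ℝ³ is the coordinate sphere of radius r and dS its surface measure. -/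
open MeasureTheory Filter
open scoped Matrix.Norms.L2Operator

/-- The exterior region `{x ∈ ℝ³ : ‖x‖ ≥ 1}`. -/
def exteriorRegion : Set (EuclideanSpace ℝ (Fin 3)) := {x | 1 ≤ ‖x‖}

/-- The partial derivative `∂_k h_{ij}(x)` of the `(i,j)` coordinate component
of a matrix-valued map `h` on the exterior region, in the `k`-th coordinate
direction. -/
noncomputable def matrixPartialDeriv
    (h : EuclideanSpace ℝ (Fin 3) → Matrix (Fin 3) (Fin 3) ℝ)
    (x : EuclideanSpace ℝ (Fin 3)) (k i j : Fin 3) : ℝ :=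
  fderivWithin ℝ (fun y => h y i j) exteriorRegion x (EuclideanSpace.single k 1)

/-- The ADM mass-density combination `∑_{i,j} (∂_i h_{ij} - ∂_j h_{ii}) x_j / r`
appearing in the flux integral defining the ADM mass. -/
noncomputable def admIntegrand
    (h : EuclideanSpace ℝ (Fin 3) → Matrix (Fin 3) (Fin 3) ℝ)
    (r : ℝ) (x : EuclideanSpace ℝ (Fin 3)) : ℝ :=
  ∑ i : Fin 3, ∑ j : Fin 3,
    (matrixPartialDeriv h x i i j - matrixPartialDeriv h x j i i) * (x j / r)

/-!
The three flux integrands add up, by linearity of the ADM integrand in the metric, to the flux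
integrand of the single tensor `e^{2f} g + g - 2 e^f g = (e^f - 1)² g`. Its first derivatives
`(e^f - 1)² ∂g + 2 e^f (e^f - 1) ∂f · g` are `O(r^{-2τ-1})`, while `S_r` has area
`r² μH²(S²)` with `μH²(S²) < ∞` (spherical coordinates exhibit `S²` as a Lipschitz image of a
square). The flux through `S_r` is therefore `O(r^{1-2τ})`, which tends to `0` as `2τ > 1`.
-/

open Real
open scoped ENNReal Topology

theorem abs_exp_sub_one_le_mul_exp_abs (t : ℝ) : |exp t - 1| ≤ |t| * exp |t| := by
  have h1 : 1 ≤ exp |t| := one_le_exp (abs_nonneg t)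
  have h2 : exp t ≤ exp |t| := exp_le_exp.2 (le_abs_self t)
  have h3 : exp t - 1 ≤ t * exp t := by
    have h := one_sub_le_exp_neg t
    rw [exp_neg] at h
    have := mul_le_mul_of_nonneg_right h (exp_pos t).le
    rw [inv_mul_cancel₀ (exp_pos t).ne', sub_mul, one_mul] at this
    linarith
  rw [abs_le]
  constructor
  · nlinarith [add_one_le_exp t, neg_abs_le t, abs_nonneg t]
  · nlinarith [mul_nonneg (sub_nonneg.2 (le_abs_self t)) (exp_pos t).le,
      mul_nonneg (abs_nonneg t) (sub_nonneg.2 h2)]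

theorem norm_sq_exp_sub_one_smul_add_smul_le {F : Type*} [NormedAddCommGroup F]
    [NormedSpace ℝ F] {C δ η t u : ℝ} {W G : F} (hC : 0 ≤ C) (hδ₀ : 0 ≤ δ) (hδ₁ : δ ≤ 1)
    (hη : 0 ≤ η) (ht : |t| ≤ C * δ) (hu : |u| ≤ C * η) (hW : ‖W‖ ≤ C * η) (hG : ‖G‖ ≤ C + 1) :
    ‖(exp t - 1) ^ 2 • W + (2 * (exp t - 1) * exp t * u) • G‖
      ≤ C ^ 2 * exp C ^ 2 * (3 * C + 2) * (δ * η) := by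
  have htC : |t| ≤ C := ht.trans (mul_le_of_le_one_right hC hδ₁)
  have hexp : exp t ≤ exp C := exp_le_exp.2 ((le_abs_self t).trans htC)
  have hE : |exp t - 1| ≤ C * exp C * δ :=
    calc |exp t - 1| ≤ |t| * exp |t| := abs_exp_sub_one_le_mul_exp_abs t
      _ ≤ C * δ * exp C := by gcongr
      _ = C * exp C * δ := by ring
  calc ‖(exp t - 1) ^ 2 • W + (2 * (exp t - 1) * exp t * u) • G‖
      ≤ |exp t - 1| ^ 2 * ‖W‖ + 2 * |exp t - 1| * exp t * |u| * ‖G‖ := by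
        refine (norm_add_le _ _).trans_eq ?_
        simp only [norm_smul, norm_pow, norm_mul, Real.norm_eq_abs, abs_two, abs_of_pos (exp_pos t)]
    _ ≤ (C * exp C * δ) ^ 2 * (C * η) + 2 * (C * exp C * δ) * exp C * (C * η) * (C + 1) := by
        gcongr
    _ = C ^ 2 * exp C ^ 2 * (C * δ + 2 * C + 2) * (δ * η) := by ring
    _ ≤ C ^ 2 * exp C ^ 2 * (3 * C + 2) * (δ * η) := by gcongr; nlinarith

theorem sq_exp_sub_one_smul_eq {E F : Type*} [AddCommGroup F] [Module ℝ F] (f : E → ℝ)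
    (g : E → F) :
    (fun y => (exp (f y) - 1) ^ 2 • g y)
      = (fun y => exp (2 * f y) • g y) + g - (2 : ℝ) • fun y => exp (f y) • g y := by
  funext y
  simp only [Pi.add_apply, Pi.sub_apply, Pi.smul_apply, two_mul, exp_add]
  module

theorem HasFDerivWithinAt.sq_exp_sub_one_smul {E F : Type*} [NormedAddCommGroup E]
    [NormedSpace ℝ E] [NormedAddCommGroup F] [NormedSpace ℝ F] {f : E → ℝ} {g : E → F}
    {f' : E →L[ℝ] ℝ} {g' : E →L[ℝ] F} {s : Set E} {x : E} (hf : HasFDerivWithinAt f f' s x)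
    (hg : HasFDerivWithinAt g g' s x) :
    HasFDerivWithinAt (fun y => (Real.exp (f y) - 1) ^ 2 • g y)
      ((Real.exp (f x) - 1) ^ 2 • g' +
        ((2 * (Real.exp (f x) - 1) * Real.exp (f x)) • f').smulRight (g x)) s x := by
  refine (((hf.exp.sub_const 1).pow 2).smul hg).congr_fderiv ?_
  rw [smul_smul, nsmul_eq_mul]
  norm_num

theorem Matrix.norm_apply_le_l2_opNorm {𝕜 m n : Type*} [RCLike 𝕜] [Fintype m] [Fintype n]
    [DecidableEq n] (A : Matrix m n 𝕜) (i : m) (j : n) : ‖A i j‖ ≤ ‖A‖ := by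
  have h := A.l2_opNorm_mulVec (EuclideanSpace.single j 1)
  rw [PiLp.norm_single, norm_one, mul_one] at h
  refine le_trans (le_of_eq ?_) ((PiLp.norm_apply_le _ i).trans h)
  simp [Matrix.mulVec_single]

noncomputable def sphericalCoords (p : Fin 2 → ℝ) : EuclideanSpace ℝ (Fin 3) :=
  !₂[sin (p 0) * cos (p 1), sin (p 0) * sin (p 1), cos (p 0)]

theorem contDiff_sphericalCoords : ContDiff ℝ 1 sphericalCoords := by
  refine PiLp.contDiff_toLp.comp (contDiff_pi.2 fun i => ?_)
  fin_cases i <;>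
    simp only [Fin.zero_eta, Fin.mk_one, Fin.reduceFinMk, Matrix.cons_val] <;> fun_prop

theorem exists_sphericalCoords_eq {x : EuclideanSpace ℝ (Fin 3)} (hx : ‖x‖ = 1) :
    ∃ p ∈ Set.Icc (fun _ => -π) (fun _ => π), sphericalCoords p = x := by
  set z : ℂ := ⟨x 0, x 1⟩
  set w : ℂ := ⟨x 2, ‖z‖⟩
  have hw : ‖w‖ = 1 := by
    have h := EuclideanSpace.real_norm_sq_eq x
    rw [hx, Fin.sum_univ_three] at h
    have hz : ‖z‖ ^ 2 = x 0 ^ 2 + x 1 ^ 2 := by rw [Complex.sq_norm, Complex.normSq_mk]; ring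
    rw [← pow_eq_one_iff_of_nonneg (norm_nonneg w) two_ne_zero, Complex.sq_norm, Complex.normSq_mk]
    linarith
  refine ⟨![Complex.arg w, Complex.arg z], ⟨fun i => ?_, fun i => ?_⟩, ?_⟩
  · fin_cases i <;> simp [(Complex.neg_pi_lt_arg _).le]
  · fin_cases i <;> simp [Complex.arg_le_pi]
  · have hcw := Complex.norm_mul_cos_arg w
    have hsw := Complex.norm_mul_sin_arg w
    rw [hw, one_mul] at hcw hsw
    ext i
    fin_cases i
    · simp [sphericalCoords, hsw, Complex.norm_mul_cos_arg z, z, w]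
    · simp [sphericalCoords, hsw, Complex.norm_mul_sin_arg z, z, w]
    · simp [sphericalCoords, hcw, w]

theorem hausdorffMeasure_unitSphere_lt_top :
    μH[2] (Metric.sphere (0 : EuclideanSpace ℝ (Fin 3)) 1) < ∞ := by
  set Q : Set (Fin 2 → ℝ) := Set.Icc (fun _ => -π) (fun _ => π)
  obtain ⟨K, hK⟩ := contDiff_sphericalCoords.contDiffOn.exists_lipschitzOnWith one_ne_zero
    (convex_Icc _ _) (isCompact_Icc (a := fun _ => -π) (b := fun _ => π))
  have hQ : μH[2] Q < ∞ := by
    have hvol : (μH[2] : Measure (Fin 2 → ℝ)) = volume := by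
      simpa using hausdorffMeasure_pi_real (ι := Fin 2)
    rw [hvol]
    exact isCompact_Icc.measure_lt_top
  calc μH[2] (Metric.sphere (0 : EuclideanSpace ℝ (Fin 3)) 1)
      ≤ μH[2] (sphericalCoords '' Q) :=
        measure_mono fun x hx => exists_sphericalCoords_eq (mem_sphere_zero_iff_norm.1 hx)
    _ ≤ K ^ (2 : ℝ) * μH[2] Q := hK.hausdorffMeasure_image_le zero_le_two
    _ < ∞ := ENNReal.mul_lt_top (by simp) hQ

theorem hausdorffMeasure_sphere_zero {E : Type*} [NormedAddCommGroup E] [NormedSpace ℝ E]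
    [MeasurableSpace E] [BorelSpace E] {d : ℝ} (hd : 0 ≤ d) {r : ℝ} (hr : 0 < r) :
    μH[d] (Metric.sphere (0 : E) r) = ENNReal.ofReal (r ^ d) * μH[d] (Metric.sphere (0 : E) 1) := by
  have h := smul_sphere' hr.ne' (0 : E) 1
  rw [smul_zero, Real.norm_of_nonneg hr.le, mul_one] at h
  rw [← h, Measure.hausdorffMeasure_smul₀ hd hr.ne', ENNReal.smul_def, smul_eq_mul,
    ← ENNReal.ofReal_coe_nnreal, NNReal.coe_rpow, coe_nnnorm, Real.norm_of_nonneg hr.le]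

theorem norm_setIntegral_sphere_le {F : EuclideanSpace ℝ (Fin 3) → ℝ} {r c : ℝ} (hr : 0 < r)
    (hF : ∀ x ∈ Metric.sphere (0 : EuclideanSpace ℝ (Fin 3)) r, ‖F x‖ ≤ c) :
    ‖∫ x in Metric.sphere (0 : EuclideanSpace ℝ (Fin 3)) r, F x ∂μH[2]‖
      ≤ c * r ^ (2 : ℝ) * μH[2].real (Metric.sphere (0 : EuclideanSpace ℝ (Fin 3)) 1) := by
  have hμ := hausdorffMeasure_sphere_zero (E := EuclideanSpace ℝ (Fin 3)) zero_le_two hr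
  refine (norm_setIntegral_le_of_norm_le_const ?_ hF).trans_eq ?_
  · rw [hμ]
    exact ENNReal.mul_lt_top ENNReal.ofReal_lt_top hausdorffMeasure_unitSphere_lt_top
  · rw [measureReal_def, measureReal_def, hμ, ENNReal.toReal_mul,
      ENNReal.toReal_ofReal (by positivity), mul_assoc]

theorem exteriorRegion_mem_nhds {x : EuclideanSpace ℝ (Fin 3)} (hx : 1 < ‖x‖) :
    exteriorRegion ∈ 𝓝 x :=
  Filter.mem_of_superset ((isOpen_lt continuous_const continuous_norm).mem_nhds hx)
    fun _ hy => show (1 : ℝ) ≤ _ from le_of_lt hy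

theorem HasFDerivWithinAt.matrixPartialDeriv_eq
    {h : EuclideanSpace ℝ (Fin 3) → Matrix (Fin 3) (Fin 3) ℝ}
    {h' : EuclideanSpace ℝ (Fin 3) →L[ℝ] Matrix (Fin 3) (Fin 3) ℝ} {x : EuclideanSpace ℝ (Fin 3)}
    (hh : HasFDerivWithinAt h h' exteriorRegion x) (hx : UniqueDiffWithinAt ℝ exteriorRegion x)
    (k i j : Fin 3) : matrixPartialDeriv h x k i j = h' (EuclideanSpace.single k 1) i j := by
  have : HasFDerivWithinAt (fun y => h y i j)
      ((Matrix.entryLinearMap ℝ ℝ i j).toContinuousLinearMap.comp h') exteriorRegion x :=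
    (Matrix.entryLinearMap ℝ ℝ i j).toContinuousLinearMap.hasFDerivAt.comp_hasFDerivWithinAt x hh
  rw [matrixPartialDeriv, this.fderivWithin hx]
  rfl

theorem admIntegrand_add_sub_two_mul
    {h₁ h₂ h₃ : EuclideanSpace ℝ (Fin 3) → Matrix (Fin 3) (Fin 3) ℝ} {x : EuclideanSpace ℝ (Fin 3)} (hd₁ : DifferentiableWithinAt ℝ h₁ exteriorRegion x)
    (hd₂ : DifferentiableWithinAt ℝ h₂ exteriorRegion x)
    (hd₃ : DifferentiableWithinAt ℝ h₃ exteriorRegion x)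
    (hx : UniqueDiffWithinAt ℝ exteriorRegion x) (r : ℝ) :
    admIntegrand h₁ r x + admIntegrand h₂ r x - 2 * admIntegrand h₃ r x
      = admIntegrand (h₁ + h₂ - (2 : ℝ) • h₃) r x := by
  have hD := (hd₁.hasFDerivWithinAt.add hd₂.hasFDerivWithinAt).sub
    (hd₃.hasFDerivWithinAt.const_smul (2 : ℝ))
  simp only [admIntegrand, hD.matrixPartialDeriv_eq hx,
    hd₁.hasFDerivWithinAt.matrixPartialDeriv_eq hx, hd₂.hasFDerivWithinAt.matrixPartialDeriv_eq hx,
    hd₃.hasFDerivWithinAt.matrixPartialDeriv_eq hx, Fin.sum_univ_three]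
  simp only [sub_apply, add_apply, smul_apply, Matrix.sub_apply, Matrix.add_apply,
    Matrix.smul_apply, smul_eq_mul]
  ring

theorem abs_admIntegrand_le {h : EuclideanSpace ℝ (Fin 3) → Matrix (Fin 3) (Fin 3) ℝ}
    {x : EuclideanSpace ℝ (Fin 3)} {r ε : ℝ} (hr : 0 < r) (hx : ‖x‖ ≤ r)
    (hε : ∀ k i j, |matrixPartialDeriv h x k i j| ≤ ε) : |admIntegrand h r x| ≤ 18 * ε := by
  have hxj : ∀ j, |x j / r| ≤ 1 := fun j => by
    rw [abs_div, abs_of_pos hr, div_le_one hr]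
    exact (PiLp.norm_apply_le x j).trans hx
  have hterm : ∀ i j, |(matrixPartialDeriv h x i i j - matrixPartialDeriv h x j i i) * (x j / r)|
      ≤ 2 * ε := fun i j => by
    rw [abs_mul]
    refine (mul_le_of_le_one_right (abs_nonneg _) (hxj j)).trans ?_
    linarith [abs_sub (matrixPartialDeriv h x i i j) (matrixPartialDeriv h x j i i),
      hε i i j, hε j i i]
  calc |admIntegrand h r x| ≤ ∑ i : Fin 3, ∑ j : Fin 3, 2 * ε := by
        refine (Finset.abs_sum_le_sum_abs _ _).trans (Finset.sum_le_sum fun i _ => ?_)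
        exact (Finset.abs_sum_le_sum_abs _ _).trans (Finset.sum_le_sum fun j _ => hterm i j)
    _ = 18 * ε := by
        simp only [Finset.sum_const, Finset.card_univ, Fintype.card_fin, nsmul_eq_mul]
        ring

theorem abs_admIntegrand_exp_smul_combination_le {τ C : ℝ}
    {g : EuclideanSpace ℝ (Fin 3) → Matrix (Fin 3) (Fin 3) ℝ} {f : EuclideanSpace ℝ (Fin 3) → ℝ}
    {x : EuclideanSpace ℝ (Fin 3)} (hτ : 0 < τ) (hC : 0 ≤ C) (hx : 1 < ‖x‖)
    (hg : DifferentiableWithinAt ℝ g exteriorRegion x)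
    (hf : DifferentiableWithinAt ℝ f exteriorRegion x)
    (hgx : ‖g x - 1‖ ≤ C * ‖x‖ ^ (-τ))
    (hdgx : ∀ k : Fin 3,
      ‖fderivWithin ℝ g exteriorRegion x (EuclideanSpace.single k 1)‖ ≤ C * ‖x‖ ^ (-τ - 1))
    (hfx : |f x| ≤ C * ‖x‖ ^ (-τ))
    (hdfx : ‖fderivWithin ℝ f exteriorRegion x‖ ≤ C * ‖x‖ ^ (-τ - 1)) :
    |admIntegrand (fun y => exp (2 * f y) • g y) ‖x‖ x + admIntegrand g ‖x‖ x
        - 2 * admIntegrand (fun y => exp (f y) • g y) ‖x‖ x|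
      ≤ 18 * (C ^ 2 * exp C ^ 2 * (3 * C + 2)) * ‖x‖ ^ (-2 * τ - 1) := by
  have hU : UniqueDiffWithinAt ℝ exteriorRegion x :=
    uniqueDiffWithinAt_of_mem_nhds (exteriorRegion_mem_nhds hx)
  have hxpos : 0 < ‖x‖ := by linarith
  have hG : ‖g x‖ ≤ C + 1 :=
    calc ‖g x‖ ≤ ‖g x - 1‖ + ‖(1 : Matrix (Fin 3) (Fin 3) ℝ)‖ := norm_le_norm_sub_add _ _
      _ ≤ C + 1 := by
        rw [norm_one]
        linarith [mul_le_of_le_one_right hC (rpow_le_one_of_one_le_of_nonpos hx.le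
          (neg_nonpos.2 hτ.le))]
  rw [admIntegrand_add_sub_two_mul (h₁ := fun y => exp (2 * f y) • g y)
      (h₃ := fun y => exp (f y) • g y) ((hf.const_mul 2).exp.smul hg) hg (hf.exp.smul hg) hU,
    ← sq_exp_sub_one_smul_eq, mul_assoc]
  refine abs_admIntegrand_le hxpos le_rfl fun k i j => ?_
  rw [(hf.hasFDerivWithinAt.sq_exp_sub_one_smul hg.hasFDerivWithinAt).matrixPartialDeriv_eq hU,
    ← Real.norm_eq_abs]
  refine (Matrix.norm_apply_le_l2_opNorm _ i j).trans ?_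
  have hu : |fderivWithin ℝ f exteriorRegion x (EuclideanSpace.single k 1)|
      ≤ C * ‖x‖ ^ (-τ - 1) := by
    rw [← Real.norm_eq_abs]
    refine ((ContinuousLinearMap.le_opNorm _ _).trans_eq ?_).trans hdfx
    rw [PiLp.norm_single, norm_one, mul_one]
  have key := norm_sq_exp_sub_one_smul_add_smul_le hC (rpow_nonneg hxpos.le _)
    (rpow_le_one_of_one_le_of_nonpos hx.le (neg_nonpos.2 hτ.le)) (rpow_nonneg hxpos.le _)
    hfx hu (hdgx k) hG
  rwa [← rpow_add hxpos, show -τ + (-τ - 1) = -2 * τ - 1 by ring] at key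

theorem conformal_mass_sum_flux_limit_general
    (τ C : ℝ) (hτ : 1 / 2 < τ) (hC : 0 < C)
    (g : EuclideanSpace ℝ (Fin 3) → Matrix (Fin 3) (Fin 3) ℝ)
    (f : EuclideanSpace ℝ (Fin 3) → ℝ)
    (hg : ContDiffOn ℝ 1 g exteriorRegion)
    (hf : ContDiffOn ℝ 1 f exteriorRegion)
    (hgdecay : ∀ x ∈ exteriorRegion, ‖g x - 1‖ ≤ C * ‖x‖ ^ (-τ))
    (hdgdecay : ∀ x ∈ exteriorRegion, ∀ k : Fin 3,
      ‖fderivWithin ℝ g exteriorRegion x (EuclideanSpace.single k 1)‖ ≤ C * ‖x‖ ^ (-τ - 1))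
    (hfdecay : ∀ x ∈ exteriorRegion, |f x| ≤ C * ‖x‖ ^ (-τ))
    (hdfdecay : ∀ x ∈ exteriorRegion,
      ‖fderivWithin ℝ f exteriorRegion x‖ ≤ C * ‖x‖ ^ (-τ - 1)) :
    Tendsto (fun r : ℝ =>
        ∫ x in Metric.sphere (0 : EuclideanSpace ℝ (Fin 3)) r,
          (admIntegrand (fun y => Real.exp (2 * f y) • g y) r x
            + admIntegrand g r x
            - 2 * admIntegrand (fun y => Real.exp (f y) • g y) r x) ∂μH[2])
      atTop (nhds 0) := by
  set K := 18 * (C ^ 2 * exp C ^ 2 * (3 * C + 2))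
  set M := μH[2].real (Metric.sphere (0 : EuclideanSpace ℝ (Fin 3)) 1)
  have hlim : Tendsto (fun r : ℝ => K * M * r ^ (1 - 2 * τ)) atTop (nhds 0) := by
    simpa using (tendsto_rpow_neg_atTop (by linarith : 0 < 2 * τ - 1)).const_mul (K * M)
  refine squeeze_zero_norm' ((eventually_gt_atTop 1).mono fun r hr => ?_) hlim
  refine (norm_setIntegral_sphere_le (c := K * r ^ (-2 * τ - 1)) (by linarith)
    fun x hx => ?_).trans_eq ?_
  · rw [mem_sphere_zero_iff_norm] at hx
    subst hx
    have hxE : x ∈ exteriorRegion := hr.le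
    exact abs_admIntegrand_exp_smul_combination_le (by linarith) hC.le hr
      (hg.differentiableOn one_ne_zero x hxE) (hf.differentiableOn one_ne_zero x hxE)
      (hgdecay x hxE) (hdgdecay x hxE) (hfdecay x hxE) (hdfdecay x hxE)
  · rw [show (1 : ℝ) - 2 * τ = -2 * τ - 1 + 2 by ring, rpow_add (by linarith)]
    ring

/-- The flux-limit form of the relation `m_g + m_{g'} = 2 m_{ḡ}` for the
conformal family `g`, `ḡ = e^f g`, `g' = e^{2f} g`, used in the proof of
Theorem 2.1 of the paper: the combined ADM flux integral of
`g' + g - 2ḡ` over large coordinate spheres tends to `0`.  Surface integrals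
are taken with respect to the two-dimensional Hausdorff measure. -/
theorem conformal_mass_sum_flux_limit
    (τ C : ℝ) (hτ : 1 / 2 < τ) (hC : 0 < C)
    (g : EuclideanSpace ℝ (Fin 3) → Matrix (Fin 3) (Fin 3) ℝ)
    (f : EuclideanSpace ℝ (Fin 3) → ℝ)
    (hg : ContDiffOn ℝ 1 g exteriorRegion)
    (hf : ContDiffOn ℝ 1 f exteriorRegion)
    (hgsymm : ∀ x ∈ exteriorRegion, (g x).IsSymm)
    (hgdecay : ∀ x ∈ exteriorRegion, ‖g x - 1‖ ≤ C * ‖x‖ ^ (-τ))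
    (hdgdecay : ∀ x ∈ exteriorRegion, ∀ k : Fin 3,
      ‖fderivWithin ℝ g exteriorRegion x (EuclideanSpace.single k 1)‖ ≤ C * ‖x‖ ^ (-τ - 1))
    (hfdecay : ∀ x ∈ exteriorRegion, |f x| ≤ C * ‖x‖ ^ (-τ))
    (hdfdecay : ∀ x ∈ exteriorRegion,
      ‖fderivWithin ℝ f exteriorRegion x‖ ≤ C * ‖x‖ ^ (-τ - 1)) :
    Tendsto (fun r : ℝ =>
        ∫ x in Metric.sphere (0 : EuclideanSpace ℝ (Fin 3)) r,
          (admIntegrand (fun y => Real.exp (2 * f y) • g y) r x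
            + admIntegrand g r x
            - 2 * admIntegrand (fun y => Real.exp (f y) • g y) r x) ∂μH[2])
      atTop (nhds 0) :=
  conformal_mass_sum_flux_limit_general τ C hτ hC g f hg hf hgdecay hdgdecay hfdecay hdfdecay
end
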